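/- arXiv:0712.1377 — 5 statements merged into one kernel-verified Lean document; each statement's English description precedes it below -/
import Mathlib

section
/- Let S̃ be an n×n symmetric matrix with S̃² = D²·C for a permutation-involution matrix C and suppose a field automorphism σ of ℂ satisfies σ(S̃) = S̃·B·P where P is a permutation matrix and B is diagonal with entries ε_j/d, ε_j = ±1, d ≠ 0. Then for all j,k: s̃_{j,k} = ε_{σ(j)}·ε_k·s̃_{σ(j),σ^{-1}(k)}, where σ also denotes the permutation given by P. -/
/-!
Applying `σ` entrywise preserves symmetry, so `S * B * P` is symmetric as well; comparing its
`(j, τ⁻¹ k)` and `(τ⁻¹ k, j)` entries gives `S j k * ε k = S (τ j) (τ⁻¹ k) * ε (τ j)` once `d` is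
cancelled, and `ε k * ε k = 1` finishes.
-/

namespace Matrix

variable {l m n R : Type*}

theorem of_ite_eq_apply_eq_toMatrix_symm [DecidableEq m] [DecidableEq n] [Zero R] [One R]
    (τ : m ≃ n) :
    of (fun i j => if i = τ j then (1 : R) else 0) = τ.symm.toPEquiv.toMatrix := by
  ext i j
  simp only [of_apply, PEquiv.toMatrix_apply, Equiv.toPEquiv_apply, Option.mem_def,
    Option.some_inj, Equiv.symm_apply_eq]

theorem mul_of_ite_eq_apply_eq_submatrix [Fintype n] [DecidableEq m] [DecidableEq n]
    [NonAssocSemiring R]     (M : Matrix l n R) (τ : m ≃ n) :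
    M * of (fun i j => if i = τ j then (1 : R) else 0) = M.submatrix id τ := by
  rw [of_ite_eq_apply_eq_toMatrix_symm, PEquiv.mul_toMatrix_toPEquiv, Equiv.symm_symm]

theorem IsSymm.apply_mul_eq_of_isSymm_submatrix [Fintype n] [DecidableEq n] [CommSemiring R]
    {A : Matrix n n R} (hA : A.IsSymm) {v : n → R} {τ : Equiv.Perm n}
    (h : ((A * diagonal v).submatrix id τ).IsSymm) (i j : n) :
    A i (τ j) * v (τ j) = A (τ i) j * v (τ i) := by
  have := h.apply i j
  simp only [submatrix_apply, id, mul_diagonal] at this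
  rw [← this, hA.apply]

end Matrix

theorem stmt3_general (n : ℕ) (S : Matrix (Fin n) (Fin n) ℂ)
    (hsym : S.IsSymm)
    (σ : ℂ ≃+* ℂ) (τ : Equiv.Perm (Fin n)) (ε : Fin n → ℂ)
    (hε : ∀ j, ε j = 1 ∨ ε j = -1) (d : ℂ) (hd : d ≠ 0)
    (hσS : S.map ⇑σ = S * Matrix.diagonal (fun j => ε j / d) *
      Matrix.of (fun i j => if i = τ j then (1 : ℂ) else 0)) :
    ∀ j k, S j k = ε (τ j) * ε k * S (τ j) (τ⁻¹ k) := by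
  intro j k
  have hσS_symm := hsym.map σ
  rw [hσS, Matrix.mul_of_ite_eq_apply_eq_submatrix] at hσS_symm
  have hjk := hsym.apply_mul_eq_of_isSymm_submatrix hσS_symm j (τ⁻¹ k)
  simp only [Equiv.Perm.coe_inv, Equiv.apply_symm_apply] at hjk
  have hεk : ε k * ε k = 1 := mul_self_eq_one_iff.mpr (hε k)
  field_simp at hjk
  linear_combination ε k * hjk - S j k * hεk

theorem stmt3 (n : ℕ) (S : Matrix (Fin n) (Fin n) ℂ) (D : ℝ) (hD : 0 < D)
    (c : Equiv.Perm (Fin n)) (hc : c * c = 1)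
    (hsym : S.IsSymm)
    (hSS : S * S = ((D^2 : ℝ) : ℂ) • Matrix.of (fun i j => if i = c j then (1 : ℂ) else 0))
    (σ : ℂ ≃+* ℂ) (τ : Equiv.Perm (Fin n)) (ε : Fin n → ℂ)
    (hε : ∀ j, ε j = 1 ∨ ε j = -1) (d : ℂ) (hd : d ≠ 0)
    (hσS : S.map ⇑σ = S * Matrix.diagonal (fun j => ε j / d) *
      Matrix.of (fun i j => if i = τ j then (1 : ℂ) else 0)) :
    ∀ j k, S j k = ε (τ j) * ε k * S (τ j) (τ⁻¹ k) :=
  stmt3_general n S hsym σ τ ε hε d hd hσS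
end

section
/- Let S̃ be an n×n real symmetric invertible matrix with S̃² = D²·I, D > 0, and let σ be a field automorphism with σ(S̃) = (1/d)·S̃·E·P for a diagonal sign matrix E = diag(ε_0,…,ε_{n-1}) and permutation matrix P, where d = s̃_{σ(0),0} > 0. If n is even then ∏_{j} ε_j = sign(P). -/
/-!
Write `Q = E * P`, so that `Qᵀ * Q = 1` and `σ(S) = d⁻¹ • S * Q`. Since `S` is symmetric,
`σ(S)ᵀ * σ(S)` is both `σ(S * S) = σ(D²) • 1` and `d⁻² • Qᵀ * (S * S) * Q = (D² / d²) • 1`,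
so `σ(D²) = D² / d²`. For `n = 2m`, `det S = ± D^(2m)`, hence `σ(det S) = det S / dⁿ`, while
`det σ(S) = det S * det Q / dⁿ`. As `det S ≠ 0`, this forces `det Q = (∏ ε_j) * sign τ = 1`.
-/

namespace Matrix

variable {ι : Type*} [Fintype ι] [DecidableEq ι]

theorem det_eq_pow_or_eq_neg_pow_of_mul_self_eq_smul_one {R : Type*} [CommRing R]
    [NoZeroDivisors R] {S : Matrix ι ι R} {c : R} {m : ℕ} (hcard : Fintype.card ι = m + m)
    (hSS : S * S = c • 1) : S.det = c ^ m ∨ S.det = -c ^ m := by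
  apply mul_self_eq_mul_self_iff.mp
  rw [← det_mul, hSS, det_smul, det_one, mul_one, hcard, pow_add]

theorem map_scalar_eq_of_map_eq_smul_mul [Nonempty ι] {R : Type*} [CommRing R]
    (σ : R →+* R) {S Q : Matrix ι ι R} {a c : R} (hsym : S.IsSymm) (hSS : S * S = c • 1)
    (hQ : Qᵀ * Q = 1) (hσS : S.map σ = a • (S * Q)) : σ c = a ^ 2 * c := by
  have hmap : (S.map σ)ᵀ * S.map σ = σ c • (1 : Matrix ι ι R) := by
    rw [← transpose_map, hsym.eq, ← Matrix.map_mul, hSS]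
    ext i j
    by_cases h : i = j <;> simp [h]
  have hconj : (S.map σ)ᵀ * S.map σ = (a ^ 2 * c) • (1 : Matrix ι ι R) := by
    rw [hσS, transpose_smul, transpose_mul, hsym.eq, smul_mul_smul_comm, Matrix.mul_assoc,
      ← Matrix.mul_assoc S, hSS, Matrix.smul_mul, Matrix.one_mul, Matrix.mul_smul, hQ, smul_smul,
      sq]
  have h := hmap.symm.trans hconj
  simpa using congrFun₂ h (Classical.arbitrary ι) (Classical.arbitrary ι)

theorem det_eq_one_of_map_eq_smul_mul {K : Type*} [Field K] (σ : K →+* K)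
    {S Q : Matrix ι ι K} {a c : K} (heven : Even (Fintype.card ι)) (hsym : S.IsSymm)
    (hSS : S * S = c • 1) (hdet : S.det ≠ 0) (ha : a ≠ 0) (hQ : Qᵀ * Q = 1)
    (hσS : S.map σ = a • (S * Q)) : Q.det = 1 := by
  cases isEmpty_or_nonempty ι
  · exact det_isEmpty
  obtain ⟨m, hm⟩ := heven
  have hc := map_scalar_eq_of_map_eq_smul_mul σ hsym hSS hQ hσS
  have hdet_pow : σ S.det = a ^ Fintype.card ι * S.det := by
    rcases det_eq_pow_or_eq_neg_pow_of_mul_self_eq_smul_one hm hSS with h | h <;>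
      rw [h, hm] <;> simp only [map_neg, map_pow, hc] <;> ring
  have hdet_map : σ S.det = a ^ Fintype.card ι * S.det * Q.det := by
    rw [RingHom.map_det, RingHom.mapMatrix_apply, hσS, det_smul, det_mul, mul_assoc]
  exact (mul_eq_left₀ (mul_ne_zero (pow_ne_zero _ ha) hdet)).mp (hdet_map.symm.trans hdet_pow)

theorem transpose_diagonal_mul_permMatrix_mul_self {R : Type*} [CommRing R] {ε : ι → R}
    (hε : ∀ j, ε j * ε j = 1) (τ : Equiv.Perm ι) :
    (diagonal ε * τ.permMatrix R)ᵀ * (diagonal ε * τ.permMatrix R) = 1 := by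
  rw [transpose_mul, diagonal_transpose, Matrix.mul_assoc, ← Matrix.mul_assoc (diagonal ε),
    diagonal_mul_diagonal, funext hε, diagonal_one, Matrix.one_mul, transpose_permMatrix,
    ← permMatrix_mul, mul_inv_cancel, permMatrix_one]

end Matrix

theorem stmt4_general (n : ℕ) (hn : Even n) (S : Matrix (Fin n) (Fin n) ℂ)
    (hsym : S.IsSymm) (hinv : IsUnit S.det)
    (D : ℝ) (hSS : S * S = ((D^2 : ℝ) : ℂ) • 1)
    (σ : ℂ ≃+* ℂ) (τ : Equiv.Perm (Fin n)) (ε : Fin n → ℂ)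
    (hε : ∀ j, ε j = 1 ∨ ε j = -1)
    (d : ℝ) (hd : 0 < d)
    (hσS : S.map ⇑σ = (1 / (d : ℂ)) •
      (S * Matrix.diagonal ε * Matrix.of (fun i j => if i = τ j then (1 : ℂ) else 0))) :
    ∏ j, ε j = ((Equiv.Perm.sign τ : ℤ) : ℂ) := by
  have hP : Matrix.of (fun i j => if i = τ j then (1 : ℂ) else 0) = τ⁻¹.permMatrix ℂ := by
    ext i j
    simp [PEquiv.toMatrix_apply, Equiv.symm_apply_eq, eq_comm (a := i)]
  have hε2 : ∀ j, ε j * ε j = 1 := fun j => by rcases hε j with h | h <;> simp [h]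
  have hdetQ := Matrix.det_eq_one_of_map_eq_smul_mul (σ : ℂ →+* ℂ) (by simpa using hn) hsym
    hSS hinv.ne_zero (one_div_ne_zero (Complex.ofReal_ne_zero.mpr hd.ne'))
    (Matrix.transpose_diagonal_mul_permMatrix_mul_self hε2 τ⁻¹)
    (by rw [← Matrix.mul_assoc, ← hP]; exact hσS)
  rw [Matrix.det_mul, Matrix.det_diagonal, Matrix.det_permutation, Equiv.Perm.sign_inv] at hdetQ
  have hsign : ((Equiv.Perm.sign τ : ℤ) : ℂ) * ((Equiv.Perm.sign τ : ℤ) : ℂ) = 1 := by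
    rw [← Int.cast_mul, ← Units.val_mul, Int.units_mul_self, Units.val_one, Int.cast_one]
  linear_combination ((Equiv.Perm.sign τ : ℤ) : ℂ) * hdetQ - (∏ j, ε j) * hsign

theorem stmt4 (n : ℕ) [NeZero n] (hn : Even n) (S : Matrix (Fin n) (Fin n) ℂ)
    (hreal : ∀ i j, ∃ r : ℝ, S i j = (r : ℂ))
    (hsym : S.IsSymm) (hinv : IsUnit S.det)
    (D : ℝ) (hD : 0 < D) (hSS : S * S = ((D^2 : ℝ) : ℂ) • 1)
    (σ : ℂ ≃+* ℂ) (τ : Equiv.Perm (Fin n)) (ε : Fin n → ℂ)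
    (hε : ∀ j, ε j = 1 ∨ ε j = -1)
    (d : ℝ) (hd : 0 < d) (hdS : S (τ 0) 0 = ((d : ℝ) : ℂ))
    (hσS : S.map ⇑σ = (1 / (d : ℂ)) •
      (S * Matrix.diagonal ε * Matrix.of (fun i j => if i = τ j then (1 : ℂ) else 0))) :
    ∏ j, ε j = ((Equiv.Perm.sign τ : ℤ) : ℂ) :=
  stmt4_general n hn S hsym hinv D hSS σ τ ε hε d hd hσS
end

section
/- Suppose S̃ is an n×n real matrix with orthogonal columns, each of squared length D², T = diag(θ_i) with |θ_i| = 1, and T·S̃·T·S̃·T = D₊·S̃ with |D₊| = D. Then for j ≠ k with s̃_{j,k} ≠ 0: D ≤ (1/|s̃_{j,k}|)·Σ_{i} |s̃_{i,j}·s̃_{i,k}|. -/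
/-!
Write `T = diag θ`. Since `SᵀS = D² I` and `T⁻¹T = I`, multiplying the twist relation
`TSTST = D₊ S` on the left by `Sᵀ T⁻¹` gives `D₊ Sᵀ T⁻¹ S = D² T S T`. Its `(j, k)` entry reads
`D₊ ∑ᵢ s̃ᵢⱼ θᵢ⁻¹ s̃ᵢₖ = D² θⱼ s̃ⱼₖ θₖ`; taking norms with `|θᵢ| = 1` and `‖D₊‖ = D` yields
`D² |s̃ⱼₖ| ≤ D ∑ᵢ |s̃ᵢⱼ s̃ᵢₖ|`, and dividing by `D` (the case `D = 0` being trivial) gives the bound.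
-/

open Matrix

namespace Matrix

variable {ι R : Type*} [Fintype ι] [DecidableEq ι] [CommRing R]

theorem transpose_mul_self_eq_smul_one {S : Matrix ι ι R} {c : R}
    (hcol : ∀ j, ∑ i, S i j ^ 2 = c) (horth : ∀ j k, j ≠ k → ∑ i, S i j * S i k = 0) :
    Sᵀ * S = c • 1 := by
  ext j k
  simp only [mul_apply, transpose_apply, smul_apply, one_apply, smul_eq_mul]
  split_ifs with h
  · simp [← hcol j, h, sq]
  · simp [horth j k h]

theorem smul_mul_mul_eq_smul_of_twist {A S T T' : Matrix ι ι R} {c d : R}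
    (hAS : A * S = c • 1) (hT : T' * T = 1) (htwist : T * S * T * S * T = d • S) :
    d • (A * T' * S) = c • (T * S * T) := by
  calc d • (A * T' * S) = A * T' * (d • S) := by rw [Matrix.mul_smul]
    _ = A * T' * (T * S * T * S * T) := by rw [htwist]
    _ = A * (T' * T) * S * (T * S * T) := by simp only [Matrix.mul_assoc]
    _ = c • (T * S * T) := by rw [hT, Matrix.mul_one, hAS, smul_mul, Matrix.one_mul]

theorem transpose_mul_diagonal_mul_apply {S : Matrix ι ι R} (v : ι → R) (j k : ι) :
    (Sᵀ * diagonal v * S) j k = ∑ i, S i j * v i * S i k := by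
  rw [Matrix.mul_assoc, mul_apply]
  simp only [diagonal_mul, transpose_apply, mul_assoc]

end Matrix

theorem norm_sum_ofReal_mul_mul_le {ι : Type*} [Fintype ι] (a b : ι → ℝ) (u : ι → ℂ)
    (hu : ∀ i, ‖u i‖ = 1) : ‖∑ i, (a i : ℂ) * u i * b i‖ ≤ ∑ i, |a i * b i| :=
  (norm_sum_le _ _).trans_eq <| Finset.sum_congr rfl fun i _ => by
    rw [norm_mul, norm_mul, hu, Complex.norm_real, Complex.norm_real, abs_mul, mul_one]; rfl

theorem stmt6 (n : ℕ) (S : Matrix (Fin n) (Fin n) ℝ) (D : ℝ)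
    (hcol : ∀ j, ∑ i, (S i j)^2 = D^2)
    (horth : ∀ j k, j ≠ k → ∑ i, S i j * S i k = 0)
    (θ : Fin n → ℂ) (hθ : ∀ i, ‖θ i‖ = 1)
    (Dp : ℂ) (hDp : ‖Dp‖ = D)
    (heq : Matrix.diagonal θ * S.map Complex.ofReal * Matrix.diagonal θ *
      S.map Complex.ofReal * Matrix.diagonal θ = Dp • S.map Complex.ofReal) :
    ∀ j k, j ≠ k → S j k ≠ 0 →
      D ≤ (1 / |S j k|) * ∑ i, |S i j * S i k| := by
  intro j k _ hSjk
  obtain rfl | hD := (hDp ▸ norm_nonneg Dp : 0 ≤ D).eq_or_lt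
  · positivity
  have hSS : (S.map Complex.ofReal)ᵀ * S.map Complex.ofReal = ((D : ℂ) ^ 2) • 1 :=
    transpose_mul_self_eq_smul_one (fun j => by simp only [map_apply]; exact_mod_cast hcol j)
      (fun j k hjk => by simp only [map_apply]; exact_mod_cast horth j k hjk)
  have hT : diagonal θ⁻¹ * diagonal θ = 1 := by
    rw [diagonal_mul_diagonal, ← diagonal_one]
    exact congrArg diagonal <| funext fun i => inv_mul_cancel₀ (norm_ne_zero_iff.mp (by simp [hθ i]))
  have hentry : D * ‖∑ i, (S i j : ℂ) * (θ i)⁻¹ * S i k‖ = D ^ 2 * |S j k| := by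
    simpa [transpose_mul_diagonal_mul_apply, mul_diagonal, diagonal_mul, hDp, hθ] using
      congrArg norm <| congr_fun₂ (smul_mul_mul_eq_smul_of_twist hSS hT heq) j k
  have hbound := norm_sum_ofReal_mul_mul_le (S · j) (S · k) (fun i => (θ i)⁻¹) (by simp [hθ])
  rw [one_div, inv_mul_eq_div, le_div_iff₀ (abs_pos.2 hSjk)]
  refine le_of_mul_le_mul_left ?_ hD
  rw [← mul_assoc, ← sq, ← hentry]
  exact mul_le_mul_of_nonneg_left hbound hD.le
end

section
/- Let α be a positive integer, d₂ = α + √(α²+2), and d₁ = d₂²/2. Then there do NOT exist θ₁, θ₂ on the unit circle with |1 + θ₂·d₂² + (1/4)·θ₁·d₂⁴| = 1 + d₂²/2. -/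
/-!
The term `θ₁ d⁴ / 4` dominates: by the triangle inequality the left-hand side is at least
`d⁴/4 - d² - 1`, which exceeds `1 + d²/2` as soon as `d⁴ - 6 d² - 8 > 0`, i.e. `d² > 3 + √17`.
For `α ≥ 1` we have `d ≥ 1 + √3`, and `(1 + √3)² = 4 + 2√3 > 3 + √17`.
-/

lemma norm_sub_norm_sub_norm_le_norm_add_add {E : Type*} [SeminormedAddCommGroup E]
    (x y z : E) : ‖z‖ - ‖x‖ - ‖y‖ ≤ ‖x + y + z‖ := by
  have h := norm_sub_le (x + y + z) (x + y)
  rw [add_sub_cancel_left] at h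
  linarith [norm_add_le x y]

lemma sub_sub_le_norm_one_add_mul_sq_add_mul_pow_four {θ₁ θ₂ : ℂ} (h₁ : ‖θ₁‖ = 1)
    (h₂ : ‖θ₂‖ = 1) (d : ℝ) :
    d ^ 4 / 4 - d ^ 2 - 1 ≤ ‖1 + θ₂ * (d : ℂ) ^ 2 + (1 / 4 : ℂ) * θ₁ * (d : ℂ) ^ 4‖ := by
  have h := norm_sub_norm_sub_norm_le_norm_add_add 1 (θ₂ * (d : ℂ) ^ 2)
    ((1 / 4 : ℂ) * θ₁ * (d : ℂ) ^ 4)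
  have h4 : ‖(1 / 4 : ℂ)‖ = 1 / 4 := by norm_num
  simp only [norm_mul, norm_pow, Complex.norm_real, Real.norm_eq_abs, h₁, h₂, h4, norm_one,
    pow_abs, abs_of_nonneg (pow_two_nonneg d), abs_of_nonneg (Even.pow_nonneg (by decide : Even 4) d)] at h
  linarith

lemma one_add_sq_div_two_lt_of_one_add_sqrt_three_le {d : ℝ} (hd : 1 + √3 ≤ d) :
    1 + d ^ 2 / 2 < d ^ 4 / 4 - d ^ 2 - 1 := by
  have h3 : √3 ^ 2 = 3 := Real.sq_sqrt (by norm_num)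
  have h3pos : 1 < √3 := by rw [Real.lt_sqrt zero_le_one]; norm_num
  have hsq : 4 + 2 * √3 ≤ d ^ 2 := by nlinarith
  nlinarith

lemma one_add_sqrt_three_le_add_sqrt_sq_add_two {a : ℝ} (ha : 1 ≤ a) :
    1 + √3 ≤ a + √(a ^ 2 + 2) := by
  have : √3 ≤ √(a ^ 2 + 2) := Real.sqrt_le_sqrt (by nlinarith)
  linarith

theorem stmt8 (α : ℕ) (hα : 1 ≤ α) :
    ¬ ∃ θ₁ θ₂ : ℂ, ‖θ₁‖ = 1 ∧ ‖θ₂‖ = 1 ∧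
      ‖(1 + θ₂ * (((α : ℝ) + Real.sqrt ((α : ℝ)^2 + 2) : ℝ) : ℂ)^2 +
          (1/4 : ℂ) * θ₁ * (((α : ℝ) + Real.sqrt ((α : ℝ)^2 + 2) : ℝ) : ℂ)^4)‖
        = 1 + ((α : ℝ) + Real.sqrt ((α : ℝ)^2 + 2))^2 / 2 := by
  rintro ⟨θ₁, θ₂, h₁, h₂, h⟩
  have hd := one_add_sqrt_three_le_add_sqrt_sq_add_two (a := (α : ℝ)) (by exact_mod_cast hα)
  have := sub_sub_le_norm_one_add_mul_sq_add_mul_pow_four h₁ h₂ ((α : ℝ) + √((α : ℝ) ^ 2 + 2))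
  linarith [one_add_sq_div_two_lt_of_one_add_sqrt_three_le hd]
end

section
/- Let d₁ be the largest real root of p₁(x) = x³ - 2x² - x + 1 and set d₂ = d₁/(d₁-1). Then d₂ is a root of x³ - x² - 2x + 1, d₁ = 2cos(π/7)/(2cos(π/7)-1), d₂ = 2cos(π/7), and the matrix S̃ with rows (1, d₁, d₂), (d₁, -d₂, 1), (d₂, 1, -d₁) satisfies S̃² = (1 + d₁² + d₂²)·I. -/
/-!
Since `cos 4θ = -cos 3θ` at `θ = π/7`, the number `c = 2 cos(π/7)` is a root of
`q(x) = x³ - x² - 2x + 1`. The involution `t ↦ t/(t-1)` exchanges the roots of `q` and of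
`p₁(x) = x³ - 2x² - x + 1`, because `(t-1)³ p₁(t/(t-1)) = -q(t)`. Hence `c/(c-1)` is a root of
`p₁`, and it is `≥ 2` because `1 < c ≤ 2`; as `p₁` has only one root in `[2, ∞)`, it is the
largest root `d₁`, and then `d₂ = c`. The matrix identity only uses `d₁ + d₂ = d₁ d₂`.
-/

open Real

lemma half_lt_cos_pi_div_seven : 1 / 2 < cos (π / 7) := by
  have h : cos (π / 3) < cos (π / 7) :=
    cos_lt_cos_of_nonneg_of_le_pi (by positivity) (by linarith [pi_pos]) (by linarith [pi_pos])
  rwa [cos_pi_div_three] at h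

lemma two_cos_pi_div_seven_isRoot :
    (2 * cos (π / 7)) ^ 3 - (2 * cos (π / 7)) ^ 2 - 2 * (2 * cos (π / 7)) + 1 = 0 := by
  set y := cos (π / 7)
  have h : cos (2 * (2 * (π / 7))) = -cos (3 * (π / 7)) := by
    rw [← cos_pi_sub]; ring_nf
  rw [cos_two_mul, cos_two_mul, cos_three_mul] at h
  have hquartic : (y + 1) * (8 * y ^ 3 - 4 * y ^ 2 - 4 * y + 1) = 0 := by
    linear_combination h
  have hcubic := (mul_eq_zero.mp hquartic).resolve_left (by linarith [half_lt_cos_pi_div_seven])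
  linear_combination hcubic

lemma div_sub_one_div_sub_one {t : ℝ} (ht : t ≠ 1) : t / (t - 1) / (t / (t - 1) - 1) = t := by
  have : t - 1 ≠ 0 := sub_ne_zero.mpr ht
  field_simp
  ring

lemma add_div_sub_one_eq_mul {t : ℝ} (ht : t ≠ 1) : t + t / (t - 1) = t * (t / (t - 1)) := by
  have : t - 1 ≠ 0 := sub_ne_zero.mpr ht
  field_simp
  ring

lemma div_sub_one_isRoot_of_isRoot {t : ℝ} (ht : t ≠ 1)
    (h : t ^ 3 - t ^ 2 - 2 * t + 1 = 0) :
    (t / (t - 1)) ^ 3 - 2 * (t / (t - 1)) ^ 2 - t / (t - 1) + 1 = 0 := by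
  have : t - 1 ≠ 0 := sub_ne_zero.mpr ht
  field_simp
  linear_combination -h

lemma eq_of_isRoot_of_two_le {r d : ℝ} (hr : 2 ≤ r) (hrd : r ≤ d)
    (hpr : r ^ 3 - 2 * r ^ 2 - r + 1 = 0) (hpd : d ^ 3 - 2 * d ^ 2 - d + 1 = 0) : d = r := by
  have hfactor : (d - r) * (d ^ 2 + d * r + r ^ 2 - 2 * d - 2 * r - 1) = 0 := by
    linear_combination hpd - hpr
  have hpos : 0 < d ^ 2 + d * r + r ^ 2 - 2 * d - 2 * r - 1 := by nlinarith
  exact sub_eq_zero.mp ((mul_eq_zero.mp hfactor).resolve_right hpos.ne')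

lemma sTilde_mul_self {R : Type*} [CommRing R] {a b : R} (h : a + b = a * b) :
    (!![1, a, b; a, -b, 1; b, 1, -a] : Matrix (Fin 3) (Fin 3) R) *
      !![1, a, b; a, -b, 1; b, 1, -a] = (1 + a ^ 2 + b ^ 2) • 1 := by
  ext i j
  fin_cases i <;> fin_cases j <;>
    simp [Matrix.mul_apply, Fin.sum_univ_succ] <;>
    first | ring1 | linear_combination h | linear_combination -h

theorem stmt9 (d₁ : ℝ)
    (hroot : d₁^3 - 2*d₁^2 - d₁ + 1 = 0)
    (hmax : ∀ x : ℝ, x^3 - 2*x^2 - x + 1 = 0 → x ≤ d₁) :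
    let d₂ := d₁ / (d₁ - 1)
    d₂^3 - d₂^2 - 2*d₂ + 1 = 0 ∧
    d₁ = 2 * Real.cos (Real.pi/7) / (2 * Real.cos (Real.pi/7) - 1) ∧
    d₂ = 2 * Real.cos (Real.pi/7) ∧
    (!![1, d₁, d₂; d₁, -d₂, 1; d₂, 1, -d₁] : Matrix (Fin 3) (Fin 3) ℝ) *
      !![1, d₁, d₂; d₁, -d₂, 1; d₂, 1, -d₁] = (1 + d₁^2 + d₂^2) • 1 := by
  intro d₂
  set c := 2 * cos (π / 7)
  have hc : c ^ 3 - c ^ 2 - 2 * c + 1 = 0 := two_cos_pi_div_seven_isRoot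
  have hc_gt : 1 < c := by linarith [half_lt_cos_pi_div_seven]
  have hc_le : c ≤ 2 := by linarith [cos_le_one (π / 7)]
  have hc_ne : c ≠ 1 := hc_gt.ne'
  have hr_ge : 2 ≤ c / (c - 1) := by
    rw [le_div_iff₀ (by linarith)]
    linarith
  have hr := div_sub_one_isRoot_of_isRoot hc_ne hc
  have hd₁ : d₁ = c / (c - 1) := eq_of_isRoot_of_two_le hr_ge (hmax _ hr) hr hroot
  have hd₂ : d₂ = c := by
    simp only [d₂, hd₁]
    exact div_sub_one_div_sub_one hc_ne
  refine ⟨hd₂ ▸ hc, hd₁, hd₂, sTilde_mul_self ?_⟩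
  rw [hd₁, hd₂, add_comm, mul_comm]
  exact add_div_sub_one_eq_mul hc_ne
end
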